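/- arXiv:2210.03718 — 4 statements merged into one kernel-verified Lean document; each statement's English description precedes it below -/
import Mathlib

section
/- Correctness of the two-phase (local/global) skyline computation for complete data: let J be a finite index set and (P_j)_{j∈J} a family of finite sets of complete tuples with P = ⋃_{j∈J} P_j. Then the global skyline of the union of the local skylines equals the skyline of P, i.e., SKY(⋃_{j∈J} SKY(P_j)) = SKY(P). -/
/-- Dominance relation between complete tuples. -/
def dominates {ι : Type*} (Dmin Dmax Ddiff : Set ι) (r s : ι → ℝ) : Prop :=
  (∀ i ∈ Dmin, r i ≤ s i) ∧ (∀ i ∈ Dmax, s i ≤ r i) ∧ (∀ i ∈ Ddiff, r i = s i) ∧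
  ((∃ i ∈ Dmin, r i < s i) ∨ (∃ i ∈ Dmax, s i < r i))

/-- The skyline of a set of complete tuples. -/
def SKY {ι : Type*} (Dmin Dmax Ddiff : Set ι) (P : Set (ι → ℝ)) : Set (ι → ℝ) :=
  {p ∈ P | ¬ ∃ q ∈ P, dominates Dmin Dmax Ddiff q p}

lemma dominates_trans {ι : Type*} {Dmin Dmax Ddiff : Set ι} {a b c : ι → ℝ}
    (hab : dominates Dmin Dmax Ddiff a b) (hbc : dominates Dmin Dmax Ddiff b c) :
    dominates Dmin Dmax Ddiff a c := by
  obtain ⟨h1, h2, h3, h4⟩ := hab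
  obtain ⟨g1, g2, g3, g4⟩ := hbc
  refine ⟨fun i hi => (h1 i hi).trans (g1 i hi),
    fun i hi => (g2 i hi).trans (h2 i hi),
    fun i hi => (h3 i hi).trans (g3 i hi), ?_⟩
  rcases h4 with ⟨i, hi, hlt⟩ | ⟨i, hi, hlt⟩
  · exact Or.inl ⟨i, hi, hlt.trans_le (g1 i hi)⟩
  · exact Or.inr ⟨i, hi, (g2 i hi).trans_lt hlt⟩

lemma dominates_irrefl {ι : Type*} {Dmin Dmax Ddiff : Set ι} {a : ι → ℝ} :
    ¬ dominates Dmin Dmax Ddiff a a := by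
  rintro ⟨-, -, -, ⟨i, -, h⟩ | ⟨i, -, h⟩⟩ <;> exact lt_irrefl _ h

/-- In a finite set, every element is either in the skyline or dominated by a
skyline element. -/
lemma exists_skyline_le {ι : Type*} {Dmin Dmax Ddiff : Set ι} {P : Set (ι → ℝ)}
    (hfin : P.Finite) {p : ι → ℝ} (hp : p ∈ P) :
    ∃ m ∈ SKY Dmin Dmax Ddiff P, m = p ∨ dominates Dmin Dmax Ddiff m p := by
  classical
  have hfin' : ∀ p : ι → ℝ, {q ∈ P | dominates Dmin Dmax Ddiff q p}.Finite :=
    fun p => hfin.subset (Set.sep_subset _ _)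
  -- strong induction on the number of dominators
  suffices H : ∀ n : ℕ, ∀ p : ι → ℝ, p ∈ P →
      (hfin' p).toFinset.card ≤ n →
      ∃ m ∈ SKY Dmin Dmax Ddiff P, m = p ∨ dominates Dmin Dmax Ddiff m p by
    exact H _ p hp le_rfl
  intro n
  induction n with
  | zero =>
    intro p hp hcard
    refine ⟨p, ⟨hp, ?_⟩, Or.inl rfl⟩
    rintro ⟨q, hq, hd⟩
    have : q ∈ (hfin' p).toFinset := by simp [Set.mem_setOf_eq, hq, hd]
    have := Finset.card_pos.mpr ⟨q, this⟩
    omega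
  | succ n ih =>
    intro p hp hcard
    by_cases hsky : ∃ q ∈ P, dominates Dmin Dmax Ddiff q p
    · obtain ⟨q, hq, hd⟩ := hsky
      have hsub : (hfin' q).toFinset ⊂ (hfin' p).toFinset := by
        constructor
        · intro x hx
          simp only [Set.Finite.mem_toFinset, Set.mem_setOf_eq] at hx ⊢
          exact ⟨hx.1, dominates_trans hx.2 hd⟩
        · intro hsub
          have : q ∈ (hfin' q).toFinset := by
            have : q ∈ (hfin' p).toFinset := by
              simp [Set.mem_setOf_eq, hq, hd]
            exact hsub this
          simp only [Set.Finite.mem_toFinset, Set.mem_setOf_eq] at this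
          exact dominates_irrefl this.2
      have hc : (hfin' q).toFinset.card ≤ n := by
        have := Finset.card_lt_card hsub
        omega
      obtain ⟨m, hm, heq⟩ := ih q hq hc
      refine ⟨m, hm, Or.inr ?_⟩
      rcases heq with rfl | hd'
      · exact hd
      · exact dominates_trans hd' hd
    · exact ⟨p, ⟨hp, hsky⟩, Or.inl rfl⟩

theorem skyline_local_global {ι : Type*} [Fintype ι] (Dmin Dmax Ddiff : Set ι)
    (hminmax : Disjoint Dmin Dmax) (hmindiff : Disjoint Dmin Ddiff)
    (hmaxdiff : Disjoint Dmax Ddiff)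
    {J : Type*} [Finite J] (P : J → Set (ι → ℝ)) (hP : ∀ j, (P j).Finite) :
    SKY Dmin Dmax Ddiff (⋃ j, SKY Dmin Dmax Ddiff (P j)) =
      SKY Dmin Dmax Ddiff (⋃ j, P j) := by
  ext p
  constructor
  · rintro ⟨hpmem, hnd⟩
    obtain ⟨S, ⟨j, rfl⟩, hpS⟩ := hpmem
    refine ⟨Set.mem_iUnion.mpr ⟨j, hpS.1⟩, ?_⟩
    rintro ⟨q, hq, hd⟩
    obtain ⟨j', hq'⟩ := Set.mem_iUnion.mp hq
    obtain ⟨m, hm, heq⟩ := exists_skyline_le (Dmin := Dmin) (Dmax := Dmax)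
      (Ddiff := Ddiff) (hP j') hq'
    apply hnd
    refine ⟨m, Set.mem_iUnion.mpr ⟨j', hm⟩, ?_⟩
    rcases heq with rfl | hd'
    · exact hd
    · exact dominates_trans hd' hd
  · rintro ⟨hpmem, hnd⟩
    obtain ⟨j, hpj⟩ := Set.mem_iUnion.mp hpmem
    have hpsky : p ∈ SKY Dmin Dmax Ddiff (P j) := by
      refine ⟨hpj, ?_⟩
      rintro ⟨q, hq, hd⟩
      exact hnd ⟨q, Set.mem_iUnion.mpr ⟨j, hq⟩, hd⟩
    refine ⟨Set.mem_iUnion.mpr ⟨j, hpsky⟩, ?_⟩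
    rintro ⟨q, hq, hd⟩
    obtain ⟨j', hq'⟩ := Set.mem_iUnion.mp hq
    exact hnd ⟨q, Set.mem_iUnion.mpr ⟨j', hq'.1⟩, hd⟩
end

section
/- Dominance propagation within a null-pattern partition: let r, q, p be incomplete tuples such that r and q have the same null pattern (i.e., {i | r i = none} = {i | q i = none}). If r ≺ q and q ≺ p, then r ≺ p. -/
/-- Dominance relation between (possibly) incomplete tuples: comparisons are
restricted to dimensions where both values are non-null. -/
def idominates {ι : Type*} (Dmin Dmax Ddiff : Set ι) (r s : ι → Option ℝ) : Prop :=
  (∀ i ∈ Dmin, ∀ x y : ℝ, r i = some x → s i = some y → x ≤ y) ∧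
  (∀ i ∈ Dmax, ∀ x y : ℝ, r i = some x → s i = some y → y ≤ x) ∧
  (∀ i ∈ Ddiff, ∀ x y : ℝ, r i = some x → s i = some y → x = y) ∧
  ((∃ i ∈ Dmin, ∃ x y : ℝ, r i = some x ∧ s i = some y ∧ x < y) ∨
   (∃ i ∈ Dmax, ∃ x y : ℝ, r i = some x ∧ s i = some y ∧ y < x))

/-- The skyline of a set of (possibly) incomplete tuples. -/
def iSKY {ι : Type*} (Dmin Dmax Ddiff : Set ι) (P : Set (ι → Option ℝ)) :
    Set (ι → Option ℝ) :=
  {p ∈ P | ¬ ∃ q ∈ P, idominates Dmin Dmax Ddiff q p}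

/-- The null pattern of an incomplete tuple. -/
def nullPattern {ι : Type*} (t : ι → Option ℝ) : Set ι := {i | t i = none}

theorem idominates_trans_of_samePattern {ι : Type*} [Fintype ι] (Dmin Dmax Ddiff : Set ι)
    (hminmax : Disjoint Dmin Dmax) (hmindiff : Disjoint Dmin Ddiff)
    (hmaxdiff : Disjoint Dmax Ddiff)
    (r q p : ι → Option ℝ) (hpat : nullPattern r = nullPattern q)
    (hrq : idominates Dmin Dmax Ddiff r q) (hqp : idominates Dmin Dmax Ddiff q p) :
    idominates Dmin Dmax Ddiff r p := by

  obtain ⟨h1, h2, h3, _⟩ := hrq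
  obtain ⟨g1, g2, g3, gs⟩ := hqp
  have key : ∀ i, (r i = none) ↔ (q i = none) := fun i =>
    ⟨fun h => by have := Set.ext_iff.mp hpat i; exact this.mp h,
     fun h => by have := Set.ext_iff.mp hpat i; exact this.mpr h⟩
  have rq : ∀ i x, r i = some x → ∃ z, q i = some z := by
    intro i x hx
    cases hq : q i with
    | none => simp [(key i).mpr hq] at hx
    | some z => exact ⟨z, rfl⟩
  have qr : ∀ i x, q i = some x → ∃ z, r i = some z := by
    intro i x hx
    cases hr : r i with
    | none => simp [(key i).mp hr] at hx
    | some z => exact ⟨z, rfl⟩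
  refine ⟨?_, ?_, ?_, ?_⟩
  · intro i hi x y hx hy
    obtain ⟨z, hz⟩ := rq i x hx
    exact le_trans (h1 i hi x z hx hz) (g1 i hi z y hz hy)
  · intro i hi x y hx hy
    obtain ⟨z, hz⟩ := rq i x hx
    exact le_trans (g2 i hi z y hz hy) (h2 i hi x z hx hz)
  · intro i hi x y hx hy
    obtain ⟨z, hz⟩ := rq i x hx
    exact (h3 i hi x z hx hz).trans (g3 i hi z y hz hy)
  · rcases gs with ⟨i, hi, x, y, hx, hy, hlt⟩ | ⟨i, hi, x, y, hx, hy, hlt⟩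
    · obtain ⟨z, hz⟩ := qr i x hx
      exact Or.inl ⟨i, hi, z, y, hz, hy, lt_of_le_of_lt (h1 i hi z x hz hx) hlt⟩
    · obtain ⟨z, hz⟩ := qr i x hx
      exact Or.inr ⟨i, hi, z, y, hz, hy, lt_of_lt_of_le hlt (h2 i hi z x hz hx)⟩
end

section
/- Within a null-pattern partition, incomplete dominance is a strict partial order: restricted to incomplete tuples all having the same null pattern, the dominance relation ≺ is transitive and irreflexive; in particular, among tuples with identical null pattern there are no cyclic dominance relationships. -/
lemma samePattern_some {ι : Type*} {s t : ι → Option ℝ} {N : Set ι}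
    (hs : nullPattern s = N) (ht : nullPattern t = N) {i : ι} {y : ℝ}
    (h : s i = some y) : ∃ z : ℝ, t i = some z := by
  have hiN : i ∉ N := by
    rw [← hs]; simp [nullPattern, h]
  have : t i ≠ none := by
    intro hn; exact hiN (ht ▸ hn)
  cases hti : t i with
  | none => exact absurd hti this
  | some z => exact ⟨z, rfl⟩

theorem idominates_strictOrder_on_pattern {ι : Type*} [Fintype ι] (Dmin Dmax Ddiff : Set ι)
    (hminmax : Disjoint Dmin Dmax) (hmindiff : Disjoint Dmin Ddiff)
    (hmaxdiff : Disjoint Dmax Ddiff) (N : Set ι) :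
    (∀ r s t : ι → Option ℝ, nullPattern r = N → nullPattern s = N → nullPattern t = N →
      idominates Dmin Dmax Ddiff r s → idominates Dmin Dmax Ddiff s t →
      idominates Dmin Dmax Ddiff r t) ∧
    (∀ r : ι → Option ℝ, nullPattern r = N → ¬ idominates Dmin Dmax Ddiff r r) := by
  constructor
  · rintro r s t hr hs ht ⟨h1, h2, h3, h4⟩ ⟨g1, g2, g3, g4⟩
    refine ⟨?_, ?_, ?_, ?_⟩
    · intro i hi x z hrx htz
      obtain ⟨y, hsy⟩ := samePattern_some hr hs hrx
      exact le_trans (h1 i hi x y hrx hsy) (g1 i hi y z hsy htz)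
    · intro i hi x z hrx htz
      obtain ⟨y, hsy⟩ := samePattern_some hr hs hrx
      exact le_trans (g2 i hi y z hsy htz) (h2 i hi x y hrx hsy)
    · intro i hi x z hrx htz
      obtain ⟨y, hsy⟩ := samePattern_some hr hs hrx
      exact (h3 i hi x y hrx hsy).trans (g3 i hi y z hsy htz)
    · rcases h4 with ⟨i, hi, x, y, hrx, hsy, hxy⟩ | ⟨i, hi, x, y, hrx, hsy, hyx⟩
      · obtain ⟨z, htz⟩ := samePattern_some hs ht hsy
        exact Or.inl ⟨i, hi, x, z, hrx, htz, lt_of_lt_of_le hxy (g1 i hi y z hsy htz)⟩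
      · obtain ⟨z, htz⟩ := samePattern_some hs ht hsy
        exact Or.inr ⟨i, hi, x, z, hrx, htz, lt_of_le_of_lt (g2 i hi y z hsy htz) hyx⟩
  · rintro r _ ⟨_, _, _, h4⟩
    rcases h4 with ⟨i, _, x, y, hx, hy, hlt⟩ | ⟨i, _, x, y, hx, hy, hlt⟩ <;>
      · rw [hx] at hy; injection hy with h; subst h; exact lt_irrefl _ hlt
end

section
/- Main Lemma (correctness of null-pattern partitioning for incomplete data): let P be a finite set of incomplete tuples, partitioned into blocks according to the null pattern (two tuples are in the same block if and only if they have the same null pattern), and let S_local denote the union of the skylines of the blocks. Then for every tuple p ∈ P that is not in the global skyline SKY(P), either p ∉ S_local, or there exists q ∈ S_local with q ≺ p. -/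
lemma idom_irrefl {ι : Type*} (Dmin Dmax Ddiff : Set ι) (a : ι → Option ℝ) :
    ¬ idominates Dmin Dmax Ddiff a a := by
  rintro ⟨-, -, -, (⟨i, -, x, y, hx, hy, hlt⟩ | ⟨i, -, x, y, hx, hy, hlt⟩)⟩ <;>
  · obtain rfl : x = y := Option.some.inj (hx.symm.trans hy)
    exact lt_irrefl _ hlt

lemma idom_trans {ι : Type*} {Dmin Dmax Ddiff : Set ι} {a b c : ι → Option ℝ}
    (hab : idominates Dmin Dmax Ddiff a b) (hbc : idominates Dmin Dmax Ddiff b c)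
    (hpat : nullPattern a = nullPattern b) : idominates Dmin Dmax Ddiff a c := by
  obtain ⟨h1, h2, h3, -⟩ := hab
  obtain ⟨g1, g2, g3, gs⟩ := hbc
  have hnn : ∀ i, (a i = none ↔ b i = none) := fun i =>
    Set.ext_iff.mp hpat i
  have hA : ∀ i x, a i = some x → ∃ z, b i = some z := by
    intro i x hx
    rcases hb : b i with _ | z
    · rw [(hnn i).mpr hb] at hx; exact absurd hx (by simp)
    · exact ⟨z, rfl⟩
  have hB : ∀ i z, b i = some z → ∃ x, a i = some x := by
    intro i z hz
    rcases ha : a i with _ | x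
    · rw [(hnn i).mp ha] at hz; exact absurd hz (by simp)
    · exact ⟨x, rfl⟩
  refine ⟨?_, ?_, ?_, ?_⟩
  · intro i hi x y hx hy
    obtain ⟨z, hz⟩ := hA i x hx
    exact le_trans (h1 i hi x z hx hz) (g1 i hi z y hz hy)
  · intro i hi x y hx hy
    obtain ⟨z, hz⟩ := hA i x hx
    exact le_trans (g2 i hi z y hz hy) (h2 i hi x z hx hz)
  · intro i hi x y hx hy
    obtain ⟨z, hz⟩ := hA i x hx
    exact (h3 i hi x z hx hz).trans (g3 i hi z y hz hy)
  · rcases gs with ⟨i, hi, z, y, hz, hy, hlt⟩ | ⟨i, hi, z, y, hz, hy, hlt⟩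
    · obtain ⟨x, hx⟩ := hB i z hz
      exact Or.inl ⟨i, hi, x, y, hx, hy, lt_of_le_of_lt (h1 i hi x z hx hz) hlt⟩
    · obtain ⟨x, hx⟩ := hB i z hz
      exact Or.inr ⟨i, hi, x, y, hx, hy, lt_of_lt_of_le hlt (h2 i hi x z hx hz)⟩

theorem main_lemma_incomplete {ι : Type*} [Fintype ι] (Dmin Dmax Ddiff : Set ι)
    (hminmax : Disjoint Dmin Dmax) (hmindiff : Disjoint Dmin Ddiff)
    (hmaxdiff : Disjoint Dmax Ddiff)
    (P : Set (ι → Option ℝ)) (hP : P.Finite)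
    (Slocal : Set (ι → Option ℝ))
    (hS : Slocal = ⋃ N : Set ι, iSKY Dmin Dmax Ddiff {p ∈ P | nullPattern p = N})
    (p : ι → Option ℝ) (hp : p ∈ P) (hps : p ∉ iSKY Dmin Dmax Ddiff P) :
    p ∉ Slocal ∨ ∃ q ∈ Slocal, idominates Dmin Dmax Ddiff q p := by
  right
  simp only [iSKY, Set.mem_setOf_eq, not_and, not_not] at hps
  obtain ⟨q, hq, hqp⟩ := hps hp
  set N := nullPattern q with hN
  set T : Set (ι → Option ℝ) :=
    {r | r ∈ P ∧ nullPattern r = N ∧ idominates Dmin Dmax Ddiff r p} with hT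
  have hqT : q ∈ T := ⟨hq, rfl, hqp⟩
  have hTfin : T.Finite := hP.subset fun r hr => hr.1
  set R : (ι → Option ℝ) → (ι → Option ℝ) → Prop :=
    fun a b => idominates Dmin Dmax Ddiff a b ∧ nullPattern a = nullPattern b with hR
  haveI : IsTrans _ R := ⟨fun a b c hab hbc =>
    ⟨idom_trans hab.1 hbc.1 hab.2, hab.2.trans hbc.2⟩⟩
  haveI : IsIrrefl _ R := ⟨fun a ha => idom_irrefl _ _ _ a ha.1⟩
  haveI : IsStrictOrder _ R := ⟨⟩
  have hwf := hTfin.wellFoundedOn (r := R)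
  rw [Set.wellFoundedOn_iff] at hwf
  obtain ⟨m, hmT, hmin⟩ := hwf.has_min T ⟨q, hqT⟩
  obtain ⟨hmP, hmN, hmp⟩ := id hmT
  refine ⟨m, ?_, hmp⟩
  rw [hS]
  refine Set.mem_iUnion.mpr ⟨N, ⟨⟨hmP, hmN⟩, ?_⟩⟩
  rintro ⟨r, ⟨hrP, hrN⟩, hrm⟩
  have hrp : idominates Dmin Dmax Ddiff r p := idom_trans hrm hmp (hrN.trans hmN.symm)
  exact hmin r ⟨hrP, hrN, hrp⟩ ⟨⟨hrm, hrN.trans hmN.symm⟩, ⟨hrP, hrN, hrp⟩, hmT⟩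
end
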